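/- arXiv:quant-ph/0603140 — 4 statements merged into one kernel-verified Lean document; each statement's English description precedes it below -/
import Mathlib

section
/- Let N ≥ 2, let j₀ ∈ {0,1,…,N−1}, let θ = arcsin(1/√N), let ψ ∈ ℂ^N be the uniform superposition vector with every entry 1/√N, and let Q = ((2/N)·J − I)·(I − 2·E_{j₀j₀}) be the Grover iterate. Then for every natural number k, the j₀-th entry of the vector Qᵏ·ψ equals sin((2k+1)·θ). -/
lemma std_mulVec (N : ℕ) (j₀ i : Fin N) (v : Fin N → ℂ) :
    (Matrix.single j₀ j₀ (1:ℂ)).mulVec v i = if i = j₀ then v j₀ else 0 := by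
  simp [Matrix.mulVec, dotProduct, Matrix.single, ite_and, eq_comm]

lemma sum_ite_const (N : ℕ) (j₀ : Fin N) (A B : ℂ) :
    (∑ l : Fin N, if l = j₀ then A else B) = A + (N - 1) * B := by
  have h : ∀ l : Fin N, (if l = j₀ then A else B) = B + (if l = j₀ then A - B else 0) := by
    intro l; split <;> ring
  simp only [h, Finset.sum_add_distrib, Finset.sum_const, Finset.sum_ite_eq',
    Finset.mem_univ, if_true, Finset.card_univ, Fintype.card_fin]
  have : (0:ℕ) < N := j₀.pos
  ring

lemma key_step (N : ℕ) (hN : 2 ≤ N) (j₀ j : Fin N) (A B : ℂ) :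
    ((((2 : ℂ) / N) • Matrix.of (fun _ _ => (1 : ℂ)) - 1) *
        (1 - (2 : ℂ) • Matrix.single j₀ j₀ (1:ℂ))).mulVec
      (fun l => if l = j₀ then A else B) j =
    if j = j₀ then (1 - 2/(N:ℂ)) * A + (2*((N:ℂ)-1)/N) * B
    else -(2/(N:ℂ)) * A + (((N:ℂ)-2)/N) * B := by
  have hNne : (N:ℂ) ≠ 0 := Nat.cast_ne_zero.mpr (by omega)
  rw [← Matrix.mulVec_mulVec]
  have h1 : (1 - (2 : ℂ) • Matrix.single j₀ j₀ (1:ℂ)).mulVec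
      (fun l => if l = j₀ then A else B) = fun l => if l = j₀ then -A else B := by
    funext i
    rw [Matrix.sub_mulVec, Matrix.one_mulVec, Matrix.smul_mulVec]
    simp only [Pi.sub_apply, Pi.smul_apply, std_mulVec, smul_eq_mul, if_pos rfl, if_true]
    split <;> ring
  rw [h1, Matrix.sub_mulVec, Matrix.smul_mulVec, Matrix.one_mulVec]
  have hsum : (Matrix.of (fun _ _ => (1 : ℂ))).mulVec (fun l => if l = j₀ then -A else B) j
      = -A + ((N:ℂ) - 1) * B := by
    simp only [Matrix.mulVec, dotProduct, Matrix.of_apply, one_mul]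
    exact sum_ite_const N j₀ (-A) B
  simp only [Pi.sub_apply, Pi.smul_apply, hsum, smul_eq_mul]
  split <;> · field_simp; ring

lemma sin_theta (N : ℕ) (hN : 2 ≤ N) :
    Real.sin (Real.arcsin (1 / Real.sqrt N)) = 1 / Real.sqrt N := by
  have hr0 : 0 < Real.sqrt N := Real.sqrt_pos.mpr (by positivity)
  have hle : 1 / Real.sqrt N ≤ 1 := by
    rw [div_le_one hr0]
    nlinarith [Real.sq_sqrt (show (0:ℝ) ≤ N by positivity),
      (show (2:ℝ) ≤ N by exact_mod_cast hN)]
  have hge : (-1:ℝ) ≤ 1 / Real.sqrt N := by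
    have h0 : (0:ℝ) ≤ 1 / Real.sqrt N := by positivity
    linarith
  exact Real.sin_arcsin hge hle

lemma cos_theta (N : ℕ) (hN : 2 ≤ N) :
    Real.cos (Real.arcsin (1 / Real.sqrt N))
      = Real.sqrt ((N:ℝ) - 1) / Real.sqrt N := by
  have hN1 : (1:ℝ) ≤ (N:ℝ) - 1 := by
    have : (2:ℝ) ≤ N := by exact_mod_cast hN
    linarith
  have hNne : (N:ℝ) ≠ 0 := by positivity
  rw [Real.cos_arcsin, div_pow, one_pow, Real.sq_sqrt (by positivity : (0:ℝ) ≤ N),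
    show 1 - 1/(N:ℝ) = ((N:ℝ)-1)/N by field_simp,
    Real.sqrt_div (by linarith)]

lemma trig_step (N : ℕ) (hN : 2 ≤ N) (φ : ℝ) :
    Real.sin (φ + 2*Real.arcsin (1 / Real.sqrt N))
      = (1 - 2/N)*Real.sin φ + (2*((N:ℝ)-1)/N)*(Real.cos φ / Real.sqrt ((N:ℝ)-1))
    ∧ Real.cos (φ + 2*Real.arcsin (1 / Real.sqrt N)) / Real.sqrt ((N:ℝ)-1)
      = -(2/N)*Real.sin φ + (((N:ℝ)-2)/N)*(Real.cos φ / Real.sqrt ((N:ℝ)-1)) := by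
  set θ : ℝ := Real.arcsin (1 / Real.sqrt N) with hθ
  have hN1 : (1:ℝ) ≤ (N:ℝ) - 1 := by
    have : (2:ℝ) ≤ N := by exact_mod_cast hN
    linarith
  set r := Real.sqrt N with hr
  set s := Real.sqrt ((N:ℝ)-1) with hs
  have hr0 : 0 < r := Real.sqrt_pos.mpr (by positivity)
  have hs0 : 0 < s := Real.sqrt_pos.mpr (by linarith)
  have hr2 : r^2 = N := Real.sq_sqrt (by positivity)
  have hs2 : s^2 = (N:ℝ) - 1 := Real.sq_sqrt (by linarith)
  have hsin : Real.sin θ = 1/r := sin_theta N hN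
  have hcos : Real.cos θ = s/r := cos_theta N hN
  have hNne : (N:ℝ) ≠ 0 := by positivity
  have hcos2 : Real.cos (2*θ) = 1 - 2/(N:ℝ) := by
    rw [Real.cos_two_mul, hcos, div_pow, hr2]; field_simp
    linear_combination 2 * hs2
  have hsin2 : Real.sin (2*θ) = 2*s/(N:ℝ) := by
    rw [Real.sin_two_mul, hsin, hcos, ← hr2]; field_simp
  constructor
  · rw [Real.sin_add, hcos2, hsin2]
    field_simp
    linear_combination (2*Real.cos φ) * hs2
  · rw [Real.cos_add, hcos2, hsin2]
    field_simp
    ring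

/-- For `N ≥ 2`, `j₀ : Fin N`, `θ = arcsin(1/√N)`, the uniform superposition `ψ`
and the Grover iterate `Q = ((2/N)·J − I)·(I − 2·E_{j₀j₀})`, for every `k : ℕ`
the `j₀`-th entry of `Qᵏ·ψ` equals `sin((2k+1)·θ)`. -/
theorem grover_iterate_amplitude (N : ℕ) (hN : 2 ≤ N) (j₀ : Fin N) (k : ℕ) :
    let θ : ℝ := Real.arcsin (1 / Real.sqrt N)
    let ψ : Fin N → ℂ := fun _ => ((1 / Real.sqrt N : ℝ) : ℂ)
    let Q : Matrix (Fin N) (Fin N) ℂ :=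
      (((2 : ℂ) / N) • Matrix.of (fun _ _ => (1 : ℂ)) - 1) *
        (1 - (2 : ℂ) • Matrix.single j₀ j₀ 1)
    (Q ^ k).mulVec ψ j₀ = ((Real.sin ((2 * k + 1) * θ) : ℝ) : ℂ) := by
  intro θ ψ Q
  have hθd : θ = Real.arcsin (1 / Real.sqrt N) := rfl
  have hN1 : (1:ℝ) ≤ (N:ℝ) - 1 := by
    have : (2:ℝ) ≤ N := by exact_mod_cast hN
    linarith
  have hs0 : (0:ℝ) < Real.sqrt ((N:ℝ)-1) := Real.sqrt_pos.mpr (by linarith)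
  have hr0 : (0:ℝ) < Real.sqrt N := Real.sqrt_pos.mpr (by positivity)
  have key : ∀ m : ℕ, (Q ^ m).mulVec ψ = fun j =>
      if j = j₀ then ((Real.sin ((2*m+1)*θ) : ℝ) : ℂ)
      else ((Real.cos ((2*m+1)*θ) / Real.sqrt ((N:ℝ)-1) : ℝ) : ℂ) := by
    intro m
    induction m with
    | zero =>
      rw [pow_zero, Matrix.one_mulVec]
      funext j
      have hang : (2*((0:ℕ):ℝ)+1)*θ = θ := by push_cast; ring
      rw [hang]
      show ((1 / Real.sqrt N : ℝ) : ℂ) = _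
      rw [hθd]
      split
      · rw [sin_theta N hN]
      · rw [cos_theta N hN]
        congr 1
        field_simp
    | succ m ih =>
      rw [pow_succ', ← Matrix.mulVec_mulVec, ih]
      funext j
      rw [show Q = (((2 : ℂ) / N) • Matrix.of (fun _ _ => (1 : ℂ)) - 1) *
        (1 - (2 : ℂ) • Matrix.single j₀ j₀ (1:ℂ)) from rfl]
      rw [key_step N hN j₀ j]
      obtain ⟨T1, T2⟩ := trig_step N hN ((2*m+1)*θ)
      rw [← hθd] at T1 T2
      have hang : (2*((m+1:ℕ):ℝ)+1)*θ = (2*(m:ℝ)+1)*θ + 2*θ := by push_cast; ring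
      split
      · rw [hang, T1]; push_cast; ring
      · rw [hang, T2]; push_cast; ring
  rw [key k]
  simp
end

section
/- Let θ be a real number with 0 < θ ≤ π/2, and let k = ⌊π/(4θ)⌋. Then sin²((2k+1)·θ) ≥ cos²(θ). In particular, with θ = arcsin(1/√N) for N ≥ 2, one gets sin²((2k+1)·θ) ≥ 1 − 1/N. -/
/-!
With `k = ⌊π/(4θ)⌋`, the angle `(2k+1)θ` lies within `θ` of `π/2`, so
`|sin((2k+1)θ)| = cos((2k+1)θ - π/2) ≥ cos θ` since cosine decreases on `[0, π]`.
For `θ = arcsin(1/√N)` one has `cos²θ = 1 - sin²θ = 1 - 1/N`.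
-/

open Real

theorem Nat.abs_two_mul_floor_add_one_sub_two_mul_le {x : ℝ} (hx : 0 ≤ x) :
    |2 * (⌊x⌋₊ : ℝ) + 1 - 2 * x| ≤ 1 := by
  have hle : (⌊x⌋₊ : ℝ) ≤ x := Nat.floor_le hx
  have hlt : x < ⌊x⌋₊ + 1 := Nat.lt_floor_add_one x
  exact abs_le.mpr ⟨by linarith, by linarith⟩

theorem abs_floor_odd_mul_sub_pi_div_two_le {θ : ℝ} (hθ : 0 < θ) :
    |(2 * (⌊π / (4 * θ)⌋₊ : ℝ) + 1) * θ - π / 2| ≤ θ := by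
  have hfloor := Nat.abs_two_mul_floor_add_one_sub_two_mul_le (x := π / (4 * θ)) (by positivity)
  have hdist : (2 * (⌊π / (4 * θ)⌋₊ : ℝ) + 1) * θ - π / 2
      = (2 * (⌊π / (4 * θ)⌋₊ : ℝ) + 1 - 2 * (π / (4 * θ))) * θ := by
    field_simp
    ring
  rw [hdist, abs_mul, abs_of_pos hθ]
  exact mul_le_of_le_one_left hθ.le hfloor

theorem cos_sq_le_sin_sq_of_abs_sub_pi_div_two_le {θ y : ℝ} (hθ : θ ≤ π / 2)
    (hy : |y - π / 2| ≤ θ) : cos θ ^ 2 ≤ sin y ^ 2 := by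
  have hcos_nonneg : 0 ≤ cos θ :=
    cos_nonneg_of_mem_Icc ⟨by linarith [abs_nonneg (y - π / 2)], hθ⟩
  have hcos_le : cos θ ≤ sin y := by
    rw [← cos_sub_pi_div_two, ← cos_abs (y - π / 2)]
    exact cos_le_cos_of_nonneg_of_le_pi (abs_nonneg _) (by linarith [pi_pos]) hy
  exact pow_le_pow_left₀ hcos_nonneg hcos_le 2

theorem cos_sq_le_sin_sq_floor_odd_mul {θ : ℝ} (hθ : 0 < θ) (hθ' : θ ≤ π / 2) :
    cos θ ^ 2 ≤ sin ((2 * (⌊π / (4 * θ)⌋₊ : ℝ) + 1) * θ) ^ 2 :=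
  cos_sq_le_sin_sq_of_abs_sub_pi_div_two_le hθ' (abs_floor_odd_mul_sub_pi_div_two_le hθ)

theorem cos_arcsin_one_div_sqrt_sq {x : ℝ} (hx : 1 ≤ x) :
    cos (arcsin (1 / √x)) ^ 2 = 1 - 1 / x := by
  have hx₀ : 0 ≤ x := by linarith
  have hinv_sq : (1 / √x) ^ 2 = 1 / x := by rw [div_pow, one_pow, sq_sqrt hx₀]
  rw [cos_arcsin, hinv_sq, sq_sqrt (sub_nonneg.mpr ((div_le_one (by linarith)).mpr hx))]

/-- For `0 < θ ≤ π/2` and `k = ⌊π/(4θ)⌋`, one has `sin²((2k+1)θ) ≥ cos²θ`.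
In particular, with `θ = arcsin(1/√N)` for `N ≥ 2`,
`sin²((2k+1)θ) ≥ 1 − 1/N`. -/
theorem grover_iteration_count_bound (θ : ℝ) (hθ : 0 < θ) (hθ' : θ ≤ π / 2) :
    (Real.sin ((2 * (⌊π / (4 * θ)⌋₊ : ℝ) + 1) * θ)) ^ 2 ≥ (Real.cos θ) ^ 2 ∧
    ∀ N : ℕ, 2 ≤ N →
      (Real.sin ((2 * (⌊π / (4 * Real.arcsin (1 / Real.sqrt N))⌋₊ : ℝ) + 1) *
          Real.arcsin (1 / Real.sqrt N))) ^ 2 ≥ 1 - 1 / N := by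
  refine ⟨cos_sq_le_sin_sq_floor_odd_mul hθ hθ', fun N hN => ?_⟩
  have hN : (1 : ℝ) ≤ N := by exact_mod_cast Nat.one_le_of_lt hN
  have harcsin_pos : 0 < arcsin (1 / √N) := arcsin_pos.mpr (by positivity)
  rw [← cos_arcsin_one_div_sqrt_sq hN]
  exact cos_sq_le_sin_sq_floor_odd_mul harcsin_pos (arcsin_le_pi_div_two _)
end

section
/- Let N ≥ 2, let j₀ ∈ {0,1,…,N−1}, let ψ ∈ ℂ^N be the uniform superposition vector, let Q = ((2/N)·J − I)·(I − 2·E_{j₀j₀}) be the Grover iterate, and set k = ⌊π/(4·arcsin(1/√N))⌋. Then measuring Qᵏ·ψ in the standard basis yields j₀ with probability at least 1 − 1/N; that is, |(Qᵏ·ψ)(j₀)|² ≥ 1 − 1/N. -/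
open Real

private lemma grover_refl_mulVec {N : ℕ} (j₀ : Fin N) (a b : ℂ) :
    ((1 : Matrix (Fin N) (Fin N) ℂ) - (2 : ℂ) • Matrix.single j₀ j₀ 1).mulVec
        (fun j => if j = j₀ then a else b)
      = fun j => if j = j₀ then -a else b := by
  funext i
  simp only [Matrix.mulVec, dotProduct, Matrix.sub_apply, Matrix.one_apply,
    Matrix.smul_apply, Matrix.single, Matrix.of_apply, smul_eq_mul, mul_one,
    ite_and, sub_mul, ite_mul, one_mul, zero_mul, mul_ite, mul_zero,
    Finset.sum_sub_distrib, Finset.sum_ite_eq, Finset.sum_ite_eq', Finset.mem_univ, if_true]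
  by_cases h : i = j₀
  · subst h
    rw [Finset.sum_eq_single i]
    · simp; ring
    · intro x _ hx; simp [hx, Ne.symm hx]
    · simp
  · simp only [Ne.symm h, if_false, sub_zero, h]
    rw [Finset.sum_congr rfl (g := fun x => if i = x then b else 0) ?_, Finset.sum_ite_eq]
    · simp
    · intro x _
      rcases eq_or_ne x j₀ with hx | hx
      · subst hx; simp [h]
      · simp [hx]

private lemma grover_diff_mulVec {N : ℕ} (j₀ : Fin N) (c b : ℂ) :
    ((((2 : ℂ) / N) • Matrix.of (fun _ _ => (1 : ℂ)) - 1)).mulVec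
        (fun j => if j = j₀ then c else b)
      = fun j => (2/(N:ℂ))*(c+((N:ℂ)-1)*b) - (if j = j₀ then c else b) := by
  funext i
  have hsum : ∑ x : Fin N, (if x = j₀ then c else b) = c + ((N:ℂ)-1)*b := by
    rw [Finset.sum_congr rfl (g := fun x => b + if x = j₀ then c - b else 0)
      (by intro x _; by_cases hx : x = j₀ <;> simp [hx])]
    rw [Finset.sum_add_distrib, Finset.sum_ite_eq', Finset.sum_const]
    simp [Finset.card_univ]
    ring
  simp only [Matrix.mulVec, dotProduct, Matrix.sub_apply, Matrix.smul_apply,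
    Matrix.of_apply, Matrix.one_apply, smul_eq_mul, mul_one, sub_mul, ite_mul, one_mul,
    zero_mul, Finset.sum_sub_distrib, Finset.sum_ite_eq, Finset.mem_univ, if_true,
    ← Finset.mul_sum, hsum]

/-- For `N ≥ 2`, `j₀ : Fin N`, the uniform superposition `ψ`, the Grover iterate
`Q = ((2/N)·J − I)·(I − 2·E_{j₀j₀})` and `k = ⌊π/(4·arcsin(1/√N))⌋` iterations,
measuring `Qᵏ·ψ` in the standard basis yields `j₀` with probability at least
`1 − 1/N`. -/
theorem grover_success_probability (N : ℕ) (hN : 2 ≤ N) (j₀ : Fin N) :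
    let ψ : Fin N → ℂ := fun _ => ((1 / Real.sqrt N : ℝ) : ℂ)
    let Q : Matrix (Fin N) (Fin N) ℂ :=
      (((2 : ℂ) / N) • Matrix.of (fun _ _ => (1 : ℂ)) - 1) *
        (1 - (2 : ℂ) • Matrix.single j₀ j₀ 1)
    let k : ℕ := ⌊π / (4 * Real.arcsin (1 / Real.sqrt N))⌋₊
    ‖(Q ^ k).mulVec ψ j₀‖ ^ 2 ≥ 1 - 1 / N := by
  intro ψ Q k
  have hN0 : (0 : ℝ) < N := by positivity
  have hN1 : (1 : ℝ) ≤ (N : ℝ) - 1 := by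
    have : (2:ℝ) ≤ N := by exact_mod_cast hN
    linarith
  set s : ℝ := Real.sqrt N with hs_def
  set t : ℝ := Real.sqrt ((N : ℝ) - 1) with ht_def
  have hs : 0 < s := Real.sqrt_pos.mpr hN0
  have hs2 : s ^ 2 = N := Real.sq_sqrt hN0.le
  have ht : 0 < t := Real.sqrt_pos.mpr (by linarith)
  have ht2 : t ^ 2 = (N : ℝ) - 1 := Real.sq_sqrt (by linarith)
  set θ : ℝ := Real.arcsin (1 / s) with hθ_def
  have hsle : 1 / s ≤ 1 := by
    rw [div_le_one hs]
    calc (1:ℝ) = Real.sqrt 1 := (Real.sqrt_one).symm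
      _ ≤ s := Real.sqrt_le_sqrt (by linarith)
  have hspos : 0 < 1 / s := by positivity
  have hsin : Real.sin θ = 1 / s := Real.sin_arcsin (by linarith) hsle
  have hcos : Real.cos θ = t / s := by
    rw [hθ_def, Real.cos_arcsin]
    rw [div_pow, one_pow, hs2, ht_def, hs_def]
    rw [show (1 : ℝ) - 1 / N = ((N:ℝ) - 1) / N by field_simp]
    exact Real.sqrt_div (by linarith) _
  set a : ℕ → ℝ := fun m => Real.sin ((2 * m + 1) * θ) with ha_def
  set b : ℕ → ℝ := fun m => Real.cos ((2 * m + 1) * θ) / t with hb_def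
  have hcos2 : Real.cos (2 * θ) = 1 - 2 / N := by
    rw [Real.cos_two_mul, hcos, div_pow, ht2, hs2]
    field_simp
    ring
  have hsin2 : Real.sin (2 * θ) = 2 * t / N := by
    rw [Real.sin_two_mul, hsin, hcos, ← hs2]
    field_simp
  have hQv : ∀ (c d : ℂ), Q.mulVec (fun j => if j = j₀ then c else d)
      = fun j => (2/(N:ℂ))*(-c+((N:ℂ)-1)*d) - (if j = j₀ then -c else d) := by
    intro c d
    have hQeq : Q = (((2 : ℂ) / N) • Matrix.of (fun _ _ => (1 : ℂ)) - 1) *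
        (1 - (2 : ℂ) • Matrix.single j₀ j₀ 1) := rfl
    rw [hQeq, ← Matrix.mulVec_mulVec, grover_refl_mulVec j₀, grover_diff_mulVec j₀]
  have key : ∀ m : ℕ, (Q ^ m).mulVec ψ = fun j => (((if j = j₀ then a m else b m : ℝ)) : ℂ) := by
    intro m
    induction m with
    | zero =>
      rw [pow_zero, Matrix.one_mulVec]
      funext j
      have ha0 : a 0 = 1 / s := by simp [ha_def, hsin]
      have hb0 : b 0 = 1 / s := by
        simp only [hb_def]
        rw [show (2 * ((0:ℕ):ℝ) + 1) * θ = θ by push_cast; ring, hcos, div_div, mul_comm,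
          ← div_div, div_self ht.ne']
      by_cases h : j = j₀ <;> simp [ψ, h, ha0, hb0, one_div] <;> rfl
    | succ m ih =>
      have hx : (2 * ((m:ℝ)+1) + 1) * θ = (2 * m + 1) * θ + 2 * θ := by ring
      have hNC : (N:ℂ) ≠ 0 := by
        simp only [ne_eq, Nat.cast_eq_zero]
        omega
      have hbt : ((N:ℝ)-1) * (Real.cos ((2 * (m:ℝ) + 1) * θ) / t)
          = t * Real.cos ((2 * (m:ℝ) + 1) * θ) := by
        rw [← ht2]; field_simp
      have hA : 2/(N:ℝ) * (-(a m) + ((N:ℝ)-1)*(b m)) + a m = a (m+1) := by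
        simp only [ha_def, hb_def]
        push_cast
        rw [hx, Real.sin_add, hcos2, hsin2, hbt]
        field_simp
        ring
      have hB : -(2/(N:ℝ)) * (a m) + (((N:ℝ)-2)/N) * (b m) = b (m+1) := by
        simp only [ha_def, hb_def]
        push_cast
        rw [hx, Real.cos_add, hcos2, hsin2, show ((N:ℝ)-2)/N * (Real.cos ((2 * (m:ℝ) + 1) * θ) / t)
          = ((N:ℝ)-2) * Real.cos ((2 * (m:ℝ) + 1) * θ) / (N * t) from by ring]
        field_simp
        ring
      rw [pow_succ', ← Matrix.mulVec_mulVec, ih]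
      rw [show (fun j => (((if j = j₀ then a m else b m : ℝ)) : ℂ))
          = fun j => if j = j₀ then ((a m : ℝ) : ℂ) else ((b m : ℝ) : ℂ) from by
        funext j; split <;> rfl]
      rw [hQv]
      funext j
      by_cases h : j = j₀ <;> simp only [h, if_true, if_false]
      · rw [← hA]; push_cast; field_simp; ring
      · rw [← hB]; push_cast; field_simp; ring
  -- final inequality
  have hval : (Q ^ k).mulVec ψ j₀ = ((a k : ℝ) : ℂ) := by rw [key k]; simp
  rw [hval, Complex.norm_real, Real.norm_eq_abs, sq_abs, ge_iff_le]
  have hθpos : 0 < θ := Real.arcsin_pos.mpr hspos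
  have hθle : θ ≤ π / 2 := Real.arcsin_le_pi_div_two _
  have hk_def : (k : ℝ) = (⌊π / (4 * θ)⌋₊ : ℝ) := by rw [hθ_def, hs_def]
  have h4θ : 0 < 4 * θ := by linarith
  have hk1 : 4 * k * θ ≤ π := by
    have := Nat.floor_le (a := π / (4 * θ)) (by positivity)
    rw [← hk_def] at this
    rw [le_div_iff₀ h4θ] at this
    linarith
  have hk2 : π < 4 * (k + 1) * θ := by
    have := Nat.lt_succ_floor (π / (4 * θ))
    rw [div_lt_iff₀ h4θ] at this
    rw [hθ_def, hs_def] at this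
    push_cast at this
    push_cast
    linarith
  set x : ℝ := (2 * (k:ℝ) + 1) * θ with hx_def
  have habs : |x - π/2| ≤ θ := by
    rw [abs_le]
    constructor <;> linarith
  have hmono : Real.cos θ ≤ Real.cos (x - π/2) := by
    rw [← Real.cos_abs (x - π/2)]
    exact Real.cos_le_cos_of_nonneg_of_le_pi (abs_nonneg _) (by linarith [Real.pi_pos]) habs
  rw [Real.cos_sub_pi_div_two] at hmono
  have hcosnn : 0 ≤ Real.cos θ := Real.cos_nonneg_of_mem_Icc ⟨by linarith, hθle⟩
  have : Real.cos θ ^ 2 ≤ Real.sin x ^ 2 := by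
    apply pow_le_pow_left₀ hcosnn hmono
  have hcos_sq : Real.cos θ ^ 2 = 1 - 1 / N := by
    rw [Real.cos_sq', hsin, div_pow, one_pow, hs2]
  have hax : a k = Real.sin x := rfl
  rw [hax]
  linarith
end

section
/- Let x be a real number and let d, P be integers with P ≥ 1 and gcd(d, P) = 1. If |x − d/P| < 1/(2P²), then d/P is a convergent of the continued fraction expansion of x. (This is the fact used in Shor's algorithm: the measured value y/Q satisfies |y/Q − d/P| ≤ 1/(2P²), so d/P can be recovered from y/Q by the continued fraction algorithm.) -/
/-- If `x` is a real number, `P ≥ 1`, `gcd(d, P) = 1` and `|x − d/P| < 1/(2P²)`,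
then `d/P` is a convergent of the continued fraction expansion of `x`. -/
theorem shor_continued_fraction_convergent (x : ℝ) (d P : ℤ) (hP : 1 ≤ P)
    (hgcd : Int.gcd d P = 1) (hx : |x - (d : ℝ) / P| < 1 / (2 * (P : ℝ) ^ 2)) :
    ∃ n : ℕ, (d : ℝ) / P = (GenContFract.of x).convs n := by
  have hcast : ((d / P : ℚ) : ℝ) = (d : ℝ) / P := by push_cast; rfl
  have hden : ((d / P : ℚ).den : ℝ) = P := by
    exact_mod_cast Rat.den_div_eq_of_coprime (by omega) hgcd
  rw [← hcast, ← hden] at hx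
  obtain ⟨n, hn⟩ := Real.exists_convs_eq_rat hx
  exact ⟨n, by rw [← hcast, hn]⟩
end
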